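/- arXiv:1809.08693 — 6 statements merged into one kernel-verified Lean document; each statement's English description precedes it below -/
import Mathlib

section
/- Let λ be an element of a field K with λ⁴ ≠ 1. Then the projective surface X_λ in P³ defined by X₀⁴ + X₁⁴ + X₂⁴ + X₃⁴ − 4λ X₀X₁X₂X₃ = 0 is smooth. -/
open scoped BigOperators

/-- For `λ` in a field `K` (of characteristic zero) with `λ⁴ ≠ 1`, the Dwork quartic
surface `X₀⁴ + X₁⁴ + X₂⁴ + X₃⁴ − 4λX₀X₁X₂X₃ = 0` in `ℙ³` is smooth: the defining
polynomial and all four partial derivatives vanish simultaneously only at the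
origin of the affine cone. -/
theorem stmt2 {K : Type*} [Field K] [CharZero K] (lam : K) (hlam : lam ^ 4 ≠ 1)
    (a b c d : K)
    (heq : a ^ 4 + b ^ 4 + c ^ 4 + d ^ 4 - 4 * lam * (a * b * c * d) = 0)
    (h0 : 4 * a ^ 3 - 4 * lam * (b * c * d) = 0)
    (h1 : 4 * b ^ 3 - 4 * lam * (a * c * d) = 0)
    (h2 : 4 * c ^ 3 - 4 * lam * (a * b * d) = 0)
    (h3 : 4 * d ^ 3 - 4 * lam * (a * b * c) = 0) :
    a = 0 ∧ b = 0 ∧ c = 0 ∧ d = 0 := by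
  have ha : a ^ 3 = lam * (b * c * d) := by linear_combination h0 / 4
  have hb : b ^ 3 = lam * (a * c * d) := by linear_combination h1 / 4
  have hc : c ^ 3 = lam * (a * b * d) := by linear_combination h2 / 4
  have hd : d ^ 3 = lam * (a * b * c) := by linear_combination h3 / 4
  have cube : ∀ x : K, x ^ 3 = 0 → x = 0 := fun x h =>
    pow_eq_zero_iff (by norm_num) |>.mp h
  have key : (a * b * c * d) ^ 3 * (1 - lam ^ 4) = 0 := by
    linear_combination (b ^ 3 * c ^ 3 * d ^ 3) * ha
      + (lam * (b * c * d) * c ^ 3 * d ^ 3) * hb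
      + (lam ^ 2 * (b * c * d) * (a * c * d) * d ^ 3) * hc
      + (lam ^ 3 * (b * c * d) * (a * c * d) * (a * b * d)) * hd
  have hP : a * b * c * d = 0 := by
    rcases mul_eq_zero.mp key with h | h
    · exact cube _ h
    · exact absurd (by linear_combination -h : lam ^ 4 = 1) hlam
  rcases mul_eq_zero.mp hP with h | hd0
  · rcases mul_eq_zero.mp h with h | hc0
    · rcases mul_eq_zero.mp h with ha0 | hb0
      · exact ⟨ha0, cube b (by rw [hb, ha0]; ring), cube c (by rw [hc, ha0]; ring),
          cube d (by rw [hd, ha0]; ring)⟩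
      · exact ⟨cube a (by rw [ha, hb0]; ring), hb0, cube c (by rw [hc, hb0]; ring),
          cube d (by rw [hd, hb0]; ring)⟩
    · exact ⟨cube a (by rw [ha, hc0]; ring), cube b (by rw [hb, hc0]; ring), hc0,
        cube d (by rw [hd, hc0]; ring)⟩
  · exact ⟨cube a (by rw [ha, hd0]; ring), cube b (by rw [hb, hd0]; ring),
      cube c (by rw [hc, hd0]; ring), hd0⟩
end

section
/- Conversely, if λ⁴ = 1 for λ in a field K of characteristic 0, then the quartic surface X₀⁴ + X₁⁴ + X₂⁴ + X₃⁴ − 4λ X₀X₁X₂X₃ = 0 in P³ has a singular point. -/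
/-- Conversely, if `λ⁴ = 1` in a field `K` of characteristic zero, then the quartic
surface `X₀⁴ + X₁⁴ + X₂⁴ + X₃⁴ − 4λX₀X₁X₂X₃ = 0` in `ℙ³` has a singular point:
there is a nonzero point of the affine cone where the defining polynomial and all
four partial derivatives vanish. -/
theorem stmt3 {K : Type*} [Field K] [CharZero K] (lam : K) (hlam : lam ^ 4 = 1) :
    ∃ a b c d : K, ¬(a = 0 ∧ b = 0 ∧ c = 0 ∧ d = 0) ∧
      a ^ 4 + b ^ 4 + c ^ 4 + d ^ 4 - 4 * lam * (a * b * c * d) = 0 ∧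
      4 * a ^ 3 - 4 * lam * (b * c * d) = 0 ∧
      4 * b ^ 3 - 4 * lam * (a * c * d) = 0 ∧
      4 * c ^ 3 - 4 * lam * (a * b * d) = 0 ∧
      4 * d ^ 3 - 4 * lam * (a * b * c) = 0 := by
  refine ⟨1, 1, 1, lam ^ 3, ?_, ?_, ?_, ?_, ?_, ?_⟩
  · rintro ⟨h, -⟩; exact one_ne_zero h
  · linear_combination (lam ^ 8 + lam ^ 4 - 3) * hlam
  · linear_combination (-4 : K) * hlam
  · linear_combination (-4 : K) * hlam
  · linear_combination (-4 : K) * hlam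
  · linear_combination 4 * lam * (lam ^ 4 + 1) * hlam
end

section
/- Let d ≥ 2 and n ≥ 1, and let σ be a permutation of n+2 variables acting on a smooth degree-d hypersurface X ⊂ P^{n+1} stable under σ. Writing σ as a product of disjoint cycles and letting m'_e(σ) be the number of cycles of σ whose length is divisible by e, the primitive cohomology character satisfies χ_pr(σ) = ((−1)^n / d) Σ_{e | d} φ(e)(1−d)^{m'_e(σ)}, where φ is Euler's totient function. In particular, for n = 2, d = 4 and σ = (123)(4) ∈ S₄, χ_pr(σ) = 3. -/
/-!
The permutation matrix of `σ` is, after reordering the basis, block diagonal with one cyclic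
shift per cycle of `σ` (fixed points included), and a cyclic shift of length `c` has
characteristic polynomial `X ^ c - 1`: every `c`-th root of unity `ζ` is an eigenvalue, with
eigenvector `i ↦ ζ ^ i`. Hence the characteristic polynomial is `∏ (X ^ c - 1)` over the
cycles, and since `X ^ c - 1` is separable, a root of unity `α` occurs in it with multiplicity
the number of cycles whose length is divisible by `orderOf α`. Grouping the `d`-th roots of
unity by their order `e ∣ d`, of which there are `φ e`, turns the sum over `α` into the sum
over `e`.
-/

open scoped BigOperators

/-- The multiplicity of `α` as an eigenvalue of the permutation matrix of `σ`. -/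
noncomputable def permEigMult (m : ℕ) (σ : Equiv.Perm (Fin m)) (α : ℂ) : ℕ :=
  Polynomial.rootMultiplicity α (Matrix.charpoly (σ.permMatrix ℂ))

/-- The full cycle type of `σ` (cycle lengths including fixed points as 1-cycles). -/
def fullCycleType (m : ℕ) (σ : Equiv.Perm (Fin m)) : Multiset ℕ :=
  σ.cycleType + Multiset.replicate (m - σ.support.card) 1

/-- `m'_e(σ)`: the number of cycles of `σ` whose length is divisible by `e`. -/
def numDivisibleCycles (m : ℕ) (σ : Equiv.Perm (Fin m)) (e : ℕ) : ℕ :=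
  Multiset.card ((fullCycleType m σ).filter (e ∣ ·))

open Polynomial Matrix

theorem X_pow_sub_one_ne_zero {R : Type*} [Ring R] [Nontrivial R] {c : ℕ} (hc : c ≠ 0) :
    (X ^ c - 1 : R[X]) ≠ 0 := by
  simpa using X_pow_sub_C_ne_zero (Nat.pos_of_ne_zero hc) (1 : R)

theorem X_sub_one_ne_zero {R : Type*} [Ring R] [Nontrivial R] : (X - 1 : R[X]) ≠ 0 := by
  simpa using X_sub_C_ne_zero (1 : R)

section RootsOfUnity

variable {K : Type*} [Field K] [CharZero K]

theorem rootMultiplicity_X_pow_sub_one {c : ℕ} (hc : c ≠ 0) (α : K) :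
    rootMultiplicity α (X ^ c - 1 : K[X]) = if orderOf α ∣ c then 1 else 0 := by
  classical
  have hsep : (X ^ c - 1 : K[X]).Separable :=
    X_pow_sub_one_separable_iff.mpr (by exact_mod_cast hc)
  rw [← count_roots, Multiset.count_eq_of_nodup (nodup_roots hsep)]
  simp [mem_roots (X_pow_sub_one_ne_zero hc), sub_eq_zero, orderOf_dvd_iff_pow_eq_one]

theorem rootMultiplicity_prod_X_pow_sub_one (α : K) {s : Multiset ℕ} (hs : 0 ∉ s) :
    rootMultiplicity α (s.map (X ^ · - 1 : ℕ → K[X])).prod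
      = (s.filter (orderOf α ∣ ·)).card := by
  induction s using Multiset.induction_on with
  | empty => simp
  | cons c s ih =>
    rw [Multiset.mem_cons, not_or] at hs
    have hprod : (s.map (X ^ · - 1 : ℕ → K[X])).prod ≠ 0 :=
      Multiset.prod_ne_zero fun h0 => by
        obtain ⟨c', hc', h⟩ := Multiset.mem_map.mp h0
        exact X_pow_sub_one_ne_zero (ne_of_mem_of_not_mem hc' hs.2 : c' ≠ 0) h
    rw [Multiset.map_cons, Multiset.prod_cons,
      rootMultiplicity_mul (mul_ne_zero (X_pow_sub_one_ne_zero (Ne.symm hs.1)) hprod),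
      rootMultiplicity_X_pow_sub_one (Ne.symm hs.1), ih hs.2, Multiset.filter_cons]
    split_ifs <;> simp [add_comm]

end RootsOfUnity

theorem sum_nthRootsFinset_orderOf {M : Type*} [AddCommMonoid M] {d : ℕ} (g : ℕ → M) :
    ∑ α ∈ nthRootsFinset d (1 : ℂ), g (orderOf α)
      = ∑ e ∈ d.divisors, Nat.totient e • g e := by
  classical
  rw [IsPrimitiveRoot.nthRoots_one_eq_biUnion_primitiveRoots,
    Finset.sum_biUnion fun i _ j _ hij => IsPrimitiveRoot.disjoint hij]
  refine Finset.sum_congr rfl fun e _ => ?_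
  rw [← Complex.card_primitiveRoots, ← Finset.sum_const]
  refine Finset.sum_congr rfl fun α hα => ?_
  rw [← (isPrimitiveRoot_of_mem_primitiveRoots hα).eq_orderOf]

namespace Equiv.Perm

section

variable {α : Type*}

theorem pred_apply_iff_of_forall_apply_eq_self {f : Perm α} {p : α → Prop}
    (hf : ∀ x, p x → f x = x) (x : α) : p (f x) ↔ p x := by
  refine ⟨fun hfx => ?_, fun hx => (hf x hx).symm ▸ hx⟩
  rwa [← f.injective (hf _ hfx)]

theorem subtypeCongr_subtypePerm_one {p : α → Prop} [DecidablePred p] {f : Perm α}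
    (h : ∀ x, p (f x) ↔ p x) (hf : ∀ x, ¬p x → f x = x) :
    (f.subtypePerm h).subtypeCongr 1 = f := by
  ext x
  by_cases hx : p x <;> simp [hx, hf]

theorem one_subtypeCongr_subtypePerm {p : α → Prop} [DecidablePred p] {f : Perm α}
    (h : ∀ x, ¬p (f x) ↔ ¬p x) (hf : ∀ x, p x → f x = x) :
    (1 : Perm {x // p x}).subtypeCongr (f.subtypePerm h) = f := by
  ext x
  by_cases hx : p x <;> simp [hx, hf]

end

variable {α β R : Type*} [DecidableEq α] [DecidableEq β]

theorem permMatrix_permCongr [Zero R] [One R] (e : α ≃ β) (σ : Perm α) :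
    (e.permCongr σ).permMatrix R = reindex e e (σ.permMatrix R) := by
  ext i j
  simp [PEquiv.toMatrix_apply, Equiv.permCongr_apply, ← Equiv.eq_symm_apply]

theorem permMatrix_sumCongr [Zero R] [One R] (σ : Perm α) (τ : Perm β) :
    (sumCongr σ τ).permMatrix R = fromBlocks (σ.permMatrix R) 0 0 (τ.permMatrix R) := by
  ext (i | i) (j | j) <;> simp [PEquiv.toMatrix_apply]

variable [Fintype α] [Fintype β] [CommRing R]

theorem charpoly_permMatrix_permCongr (e : α ≃ β) (σ : Perm α) :
    ((e.permCongr σ).permMatrix R).charpoly = (σ.permMatrix R).charpoly := by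
  rw [permMatrix_permCongr, charpoly_reindex]

theorem charpoly_permMatrix_eq_of_isConj {σ τ : Perm α} (h : IsConj σ τ) :
    (σ.permMatrix R).charpoly = (τ.permMatrix R).charpoly := by
  obtain ⟨π, rfl⟩ := isConj_iff.mp h
  rw [← permCongr_eq_mul, charpoly_permMatrix_permCongr]

theorem charpoly_permMatrix_subtypeCongr {p : α → Prop} [DecidablePred p]
    (a : Perm {x // p x}) (b : Perm {x // ¬p x}) :
    ((a.subtypeCongr b).permMatrix R).charpoly
      = (a.permMatrix R).charpoly * (b.permMatrix R).charpoly := by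
  rw [Perm.subtypeCongr, charpoly_permMatrix_permCongr, permMatrix_sumCongr,
    charpoly_fromBlocks_zero₂₁]

theorem charpoly_permMatrix_one :
    ((1 : Perm α).permMatrix R).charpoly = (X - 1) ^ Fintype.card α := by
  rw [Matrix.permMatrix_one, charpoly_one]

theorem charpoly_permMatrix_subtypeCongr_mul_pow {p : α → Prop} [DecidablePred p]
    (a : Perm {x // p x}) (b : Perm {x // ¬p x}) :
    ((a.subtypeCongr b).permMatrix R).charpoly * (X - 1) ^ Fintype.card α
      = ((a.subtypeCongr 1).permMatrix R).charpoly
        * (((1 : Perm {x // p x}).subtypeCongr b).permMatrix R).charpoly := by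
  have hcard : Fintype.card α = Fintype.card {x // p x} + Fintype.card {x // ¬p x} := by
    rw [Fintype.card_subtype_compl, Nat.add_sub_cancel' (Fintype.card_subtype_le p)]
  simp only [charpoly_permMatrix_subtypeCongr, charpoly_permMatrix_one, hcard, pow_add]
  ring

theorem charpoly_permMatrix_mul_mul_pow_of_disjoint {σ τ : Perm α} (h : σ.Disjoint τ) :
    ((σ * τ).permMatrix R).charpoly * (X - 1) ^ Fintype.card α
      = (σ.permMatrix R).charpoly * (τ.permMatrix R).charpoly := by
  let p : α → Prop := (· ∈ σ.support)
  have hτ_fix : ∀ x, p x → τ x = x := fun x hx => notMem_support.mp (h.mem_imp hx)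
  let a := σ.subtypePerm (p := p) fun x => apply_mem_support
  let b := τ.subtypePerm (p := fun x => ¬p x)
    fun x => (pred_apply_iff_of_forall_apply_eq_self hτ_fix x).not
  have hσ : a.subtypeCongr 1 = σ :=
    subtypeCongr_subtypePerm_one _ fun x hx => notMem_support.mp hx
  have hτ : (1 : Perm {x // p x}).subtypeCongr b = τ := one_subtypeCongr_subtypePerm _ hτ_fix
  have hστ : a.subtypeCongr b = σ * τ := by
    calc a.subtypeCongr b = a.subtypeCongr 1 * (1 : Perm {x // p x}).subtypeCongr b := by
          simpa using map_mul (subtypeCongrHom p) (a, 1) (1, b)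
      _ = σ * τ := by rw [hσ, hτ]
  have key := charpoly_permMatrix_subtypeCongr_mul_pow (R := R) a b
  rwa [hστ, hσ, hτ] at key

theorem charpoly_permMatrix_finRotate (k : ℕ) :
    ((finRotate (k + 1)).permMatrix ℂ).charpoly = X ^ (k + 1) - 1 := by
  set M := (finRotate (k + 1)).permMatrix ℂ
  have hroot : ∀ ζ ∈ nthRootsFinset (k + 1) (1 : ℂ), M.charpoly.IsRoot ζ := by
    intro ζ hζ
    rw [mem_nthRootsFinset k.succ_pos] at hζ
    rw [IsRoot, eval_charpoly, ← exists_mulVec_eq_zero_iff]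
    refine ⟨fun i => ζ ^ (i : ℕ), fun h => by simpa using congrFun h 0, ?_⟩
    ext i
    rw [sub_mulVec, permMatrix_mulVec]
    rcases Fin.eq_castSucc_or_eq_last i with ⟨j, rfl⟩ | rfl
    · simp [pow_succ']
    · simp [← pow_succ', hζ]
  have hdvd : X ^ (k + 1) - 1 ∣ M.charpoly := by
    rw [X_pow_sub_one_eq_prod k.succ_pos (Complex.isPrimitiveRoot_exp _ k.succ_ne_zero)]
    exact Finset.prod_dvd_of_coprime
      ((pairwise_coprime_X_sub_C Function.injective_id).set_pairwise _)
      fun ζ hζ => dvd_iff_isRoot.mpr (hroot ζ hζ)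
  refine eq_of_monic_of_dvd_of_natDegree_le ?_ M.charpoly_monic hdvd ?_
  · simpa using monic_X_pow_sub_C (1 : ℂ) k.succ_ne_zero
  · rw [charpoly_natDegree_eq_dim, Fintype.card_fin]
    simpa using (natDegree_X_pow_sub_C (n := k + 1) (r := (1 : ℂ))).ge

theorem charpoly_permMatrix_of_isCycle {c : Perm α} (hc : c.IsCycle) :
    (c.permMatrix ℂ).charpoly
      = (X ^ c.support.card - 1) * (X - 1) ^ (Fintype.card α - c.support.card) := by
  obtain ⟨k, hk⟩ : ∃ k, c.support.card = k + 2 :=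
    ⟨_, (Nat.sub_add_cancel hc.two_le_card_support).symm⟩
  let f : Fin (k + 2) ≃ {x // x ∈ c.support} :=
    (finCongr hk.symm).trans c.support.equivFin.symm
  have hconj : IsConj c ((finRotate (k + 2)).extendDomain f) :=
    hc.isConj (isCycle_finRotate.extendDomain f) (by
      rw [card_support_extend_domain, support_finRotate, Finset.card_univ, Fintype.card_fin, hk])
  rw [charpoly_permMatrix_eq_of_isConj hconj, extendDomain, ← one_def,
    charpoly_permMatrix_subtypeCongr]
  simp only [charpoly_permMatrix_permCongr, charpoly_permMatrix_finRotate,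
    charpoly_permMatrix_one, Fintype.card_subtype_compl, Fintype.card_coe, hk]

theorem charpoly_permMatrix_mul_pow_card_support (σ : Perm α) :
    (σ.permMatrix ℂ).charpoly * (X - 1) ^ σ.support.card
      = (σ.cycleType.map (X ^ · - 1)).prod * (X - 1) ^ Fintype.card α := by
  induction σ using cycle_induction_on with
  | base_one => simp [charpoly_one]
  | base_cycles c hc =>
    rw [charpoly_permMatrix_of_isCycle hc, hc.cycleType, Multiset.map_singleton,
      Multiset.prod_singleton, mul_assoc, ← pow_add, Nat.sub_add_cancel c.support.card_le_univ]
  | induction_disjoint σ τ hd _ hσ hτ =>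
    refine mul_right_cancel₀ (pow_ne_zero (Fintype.card α) X_sub_one_ne_zero) ?_
    calc ((σ * τ).permMatrix ℂ).charpoly * (X - 1) ^ (σ * τ).support.card
          * (X - 1) ^ Fintype.card α
        = ((σ * τ).permMatrix ℂ).charpoly * (X - 1) ^ Fintype.card α
          * (X - 1) ^ σ.support.card * (X - 1) ^ τ.support.card := by
          rw [hd.card_support_mul, pow_add]
          ring
      _ = (σ.permMatrix ℂ).charpoly * (X - 1) ^ σ.support.card
          * ((τ.permMatrix ℂ).charpoly * (X - 1) ^ τ.support.card) := by
          rw [charpoly_permMatrix_mul_mul_pow_of_disjoint hd]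
          ring
      _ = _ := by
          rw [hσ, hτ, hd.cycleType_mul, Multiset.map_add, Multiset.prod_add]
          ring

theorem charpoly_permMatrix_eq_prod_partition (σ : Perm α) :
    (σ.permMatrix ℂ).charpoly = (σ.partition.parts.map (X ^ · - 1)).prod := by
  refine mul_right_cancel₀ (pow_ne_zero σ.support.card X_sub_one_ne_zero) ?_
  rw [charpoly_permMatrix_mul_pow_card_support, parts_partition, Multiset.map_add,
    Multiset.prod_add, Multiset.map_replicate, Multiset.prod_replicate, pow_one, mul_assoc,
    ← pow_add, Nat.sub_add_cancel σ.support.card_le_univ]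

end Equiv.Perm

theorem fullCycleType_eq_parts_partition (m : ℕ) (σ : Equiv.Perm (Fin m)) :
    fullCycleType m σ = σ.partition.parts := by
  rw [fullCycleType, Equiv.Perm.parts_partition, Fintype.card_fin]

theorem permEigMult_eq_numDivisibleCycles_orderOf (m : ℕ) (σ : Equiv.Perm (Fin m)) (α : ℂ) :
    permEigMult m σ α = numDivisibleCycles m σ (orderOf α) := by
  rw [permEigMult, Equiv.Perm.charpoly_permMatrix_eq_prod_partition, numDivisibleCycles,
    fullCycleType_eq_parts_partition,
    rootMultiplicity_prod_X_pow_sub_one _ fun h => (σ.partition.parts_pos h).false]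

theorem sum_nthRootsFinset_pow_permEigMult (m d : ℕ) (σ : Equiv.Perm (Fin m)) (z : ℂ) :
    ∑ α ∈ nthRootsFinset d (1 : ℂ), z ^ permEigMult m σ α
      = ∑ e ∈ d.divisors, (Nat.totient e : ℂ) * z ^ numDivisibleCycles m σ e := by
  simp only [permEigMult_eq_numDivisibleCycles_orderOf]
  rw [sum_nthRootsFinset_orderOf fun e => z ^ numDivisibleCycles m σ e]
  simp only [nsmul_eq_mul]

theorem stmt7_general (n d : ℕ) (σ : Equiv.Perm (Fin (n + 2))) :
    (((-1 : ℂ) ^ n / (d : ℂ)) *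
        ∑ α ∈ Polynomial.nthRootsFinset d (1 : ℂ), ((1 : ℂ) - (d : ℂ)) ^ permEigMult (n + 2) σ α
      = ((-1 : ℂ) ^ n / (d : ℂ)) *
        ∑ e ∈ Nat.divisors d, (Nat.totient e : ℂ) * ((1 : ℂ) - (d : ℂ)) ^ numDivisibleCycles (n + 2) σ e) ∧
    (((-1 : ℂ) ^ 2 / (4 : ℂ)) *
        ∑ α ∈ Polynomial.nthRootsFinset 4 (1 : ℂ),
          ((1 : ℂ) - (4 : ℂ)) ^ permEigMult 4 (Equiv.swap 0 1 * Equiv.swap 1 2) α = 3) := by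
  refine ⟨by rw [sum_nthRootsFinset_pow_permEigMult], ?_⟩
  have hcycles : fullCycleType 4 (Equiv.swap 0 1 * Equiv.swap 1 2) = {3, 1} := by decide
  have hdivisors : Nat.divisors 4 = {1, 2, 4} := by decide
  have htotient : Nat.totient 4 = 2 := by decide
  rw [sum_nthRootsFinset_pow_permEigMult, hdivisors]
  norm_num [numDivisibleCycles, hcycles, htotient, Multiset.filter_singleton]

/-- For a degree-`d` hypersurface in `ℙ^{n+1}` stable under a coordinate permutation
`σ`, the primitive cohomology character
`χ_pr(σ) = ((−1)^n/d) Σ_{α^d=1} (1−d)^{m_α(σ)}` equals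
`((−1)^n/d) Σ_{e∣d} φ(e)(1−d)^{m'_e(σ)}`; in particular for `n = 2`, `d = 4`
and `σ = (0 1 2)` the value is `3`. -/
theorem stmt7 (n d : ℕ) (hd : 2 ≤ d) (σ : Equiv.Perm (Fin (n + 2))) :
    (((-1 : ℂ) ^ n / (d : ℂ)) *
        ∑ α ∈ Polynomial.nthRootsFinset d (1 : ℂ), ((1 : ℂ) - (d : ℂ)) ^ permEigMult (n + 2) σ α
      = ((-1 : ℂ) ^ n / (d : ℂ)) *
        ∑ e ∈ Nat.divisors d, (Nat.totient e : ℂ) * ((1 : ℂ) - (d : ℂ)) ^ numDivisibleCycles (n + 2) σ e) ∧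
    (((-1 : ℂ) ^ 2 / (4 : ℂ)) *
        ∑ α ∈ Polynomial.nthRootsFinset 4 (1 : ℂ),
          ((1 : ℂ) - (4 : ℂ)) ^ permEigMult 4 (Equiv.swap 0 1 * Equiv.swap 1 2) α = 3) :=
  stmt7_general n d σ
end

section
/- Let K be a field of characteristic not 2, and λ ∈ K with λ ≠ 0 and λ⁴ ≠ 1. Then the map α ↦ α⁴ gives a bijection between the set of roots in K of u⁴ + 3 − 4λu = 0 and the set of roots in K of (s+3)⁴ − (4λ)⁴ s = 0, with inverse β ↦ (β+3)/(4λ). -/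
/-!
If `α ^ n + d = c * α` then raising both sides to the `n`-th power gives `(α ^ n + d) ^ n = c ^ n * α ^ n`,
so `α ^ n` is a root of `(s + d) ^ n - c ^ n * s`. Conversely, for a root `β` of the latter,
`(β + d) / c` is an `n`-th root of `β` and so satisfies `u ^ n + d = c * u`. These two maps are
mutually inverse, which gives the bijection.
-/

namespace RootsOfShiftedPower

variable {K : Type*} (n : ℕ) (d c : K)

theorem mapsTo_pow [CommRing K] :
    Set.MapsTo (· ^ n) {α : K | α ^ n + d - c * α = 0} {β : K | (β + d) ^ n - c ^ n * β = 0} := by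
  intro α hα
  simp only [Set.mem_ofPred_eq, sub_eq_zero] at hα ⊢
  rw [hα, mul_pow]

variable [Field K] {n d c}

theorem rightInvOn (hc : c ≠ 0) :
    Set.RightInvOn (fun β => (β + d) / c) (· ^ n) {β : K | (β + d) ^ n - c ^ n * β = 0} := by
  intro β hβ
  simp only [Set.mem_ofPred_eq, sub_eq_zero] at hβ
  simp only [div_pow, hβ, mul_div_cancel_left₀ β (pow_ne_zero n hc)]

theorem leftInvOn (hc : c ≠ 0) :
    Set.LeftInvOn (fun β => (β + d) / c) (· ^ n) {α : K | α ^ n + d - c * α = 0} := by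
  intro α hα
  simp only [Set.mem_ofPred_eq, sub_eq_zero] at hα
  simp only [hα, mul_div_cancel_left₀ α hc]

theorem mapsTo_div (hc : c ≠ 0) :
    Set.MapsTo (fun β => (β + d) / c) {β : K | (β + d) ^ n - c ^ n * β = 0}
      {α : K | α ^ n + d - c * α = 0} := by
  intro β hβ
  have hpow : ((β + d) / c) ^ n = β := rightInvOn hc hβ
  simp only [Set.mem_ofPred_eq, hpow, mul_div_cancel₀ _ hc, sub_self]

end RootsOfShiftedPower

open RootsOfShiftedPower in
theorem stmt11_general {K : Type*} [Field K] (h2 : (2 : K) ≠ 0) (lam : K)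
    (hlam0 : lam ≠ 0) :
    Set.BijOn (fun α : K => α ^ 4)
      {α : K | α ^ 4 + 3 - 4 * lam * α = 0}
      {β : K | (β + 3) ^ 4 - (4 * lam) ^ 4 * β = 0} ∧
    Set.InvOn (fun β : K => (β + 3) / (4 * lam)) (fun α : K => α ^ 4)
      {α : K | α ^ 4 + 3 - 4 * lam * α = 0}
      {β : K | (β + 3) ^ 4 - (4 * lam) ^ 4 * β = 0} := by
  have h4 : (4 : K) ≠ 0 := by
    simpa [show (4 : K) = 2 * 2 by norm_num] using h2
  have hc : 4 * lam ≠ 0 := mul_ne_zero h4 hlam0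
  have hinv : Set.InvOn (fun β : K => (β + 3) / (4 * lam)) (fun α : K => α ^ 4)
      {α : K | α ^ 4 + 3 - 4 * lam * α = 0}
      {β : K | (β + 3) ^ 4 - (4 * lam) ^ 4 * β = 0} :=
    ⟨leftInvOn hc, rightInvOn hc⟩
  exact ⟨hinv.bijOn (mapsTo_pow 4 3 _) (mapsTo_div hc), hinv⟩

/-- For `λ` in a field `K` of characteristic `≠ 2` with `λ ≠ 0`, `λ⁴ ≠ 1`, the map
`α ↦ α⁴` is a bijection from the roots of `u⁴ + 3 − 4λu` onto the roots of
`(s+3)⁴ − (4λ)⁴ s`, with inverse `β ↦ (β+3)/(4λ)`. -/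
theorem stmt11 {K : Type*} [Field K] (h2 : (2 : K) ≠ 0) (lam : K)
    (hlam0 : lam ≠ 0) (hlam1 : lam ^ 4 ≠ 1) :
    Set.BijOn (fun α : K => α ^ 4)
      {α : K | α ^ 4 + 3 - 4 * lam * α = 0}
      {β : K | (β + 3) ^ 4 - (4 * lam) ^ 4 * β = 0} ∧
    Set.InvOn (fun β : K => (β + 3) / (4 * lam)) (fun α : K => α ^ 4)
      {α : K | α ^ 4 + 3 - 4 * lam * α = 0}
      {β : K | (β + 3) ^ 4 - (4 * lam) ^ 4 * β = 0} :=
  stmt11_general h2 lam hlam0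
end

section
/- Let λ⁴ ≠ 1 and set, in coordinates (u : X₂ : X₃ : w) of weighted projective space P(1,1,1,2), the surface S: w² = u⁴ − X₂⁴ − X₃⁴ + 4λu²X₂X₃ + 2λ²X₂²X₃². A line X₂ = aX₃ in P² is a bitangent of the branch quartic u⁴ − X₂⁴ − X₃⁴ + 4λu²X₂X₃ + 2λ²X₂²X₃² = 0 if and only if a⁴ + 2λ²a² + 1 = 0; and the roots of a⁴ + 2λ²a² + 1 = 0 are a = ±√(−λ² ± √(λ⁴−1)), which lie in Q(√(−2(λ²−1)), √(−2(λ²+1))). -/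
/-- For rational `λ` with `λ⁴ ≠ 1`, consider the double cover
`w² = u⁴ − X₂⁴ − X₃⁴ + 4λu²X₂X₃ + 2λ²X₂²X₃²` of `ℙ²` branched along the quartic
`C`.  A line `X₂ = aX₃` is a bitangent of `C` (i.e. the restriction of the
quartic to it is a perfect square) iff `a⁴ + 2λ²a² + 1 = 0`; the roots of this
equation are `a = ±√(−λ² ± √(λ⁴−1))` (i.e. `(a²+λ²)² = λ⁴−1`), and they lie in
`ℚ(√(−2(λ²−1)), √(−2(λ²+1)))`, being `ℚ*`-combinations `δ·√(−2(λ²−1)) + γ·√(−2(λ²+1))`. -/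
theorem stmt15 (lam : ℚ) (hlam : lam ^ 4 ≠ 1) :
    (∀ a : ℂ,
      (∃ p q r : ℂ, ∀ u t : ℂ,
        u ^ 4 + 4 * (lam : ℂ) * a * u ^ 2 * t ^ 2 +
          (2 * (lam : ℂ) ^ 2 * a ^ 2 - a ^ 4 - 1) * t ^ 4 =
        (p * u ^ 2 + q * u * t + r * t ^ 2) ^ 2) ↔
      a ^ 4 + 2 * (lam : ℂ) ^ 2 * a ^ 2 + 1 = 0) ∧
    (∀ a : ℂ, a ^ 4 + 2 * (lam : ℂ) ^ 2 * a ^ 2 + 1 = 0 ↔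
      (a ^ 2 + (lam : ℂ) ^ 2) ^ 2 = (lam : ℂ) ^ 4 - 1) ∧
    (∀ s t : ℂ, s ^ 2 = -2 * ((lam : ℂ) ^ 2 - 1) → t ^ 2 = -2 * ((lam : ℂ) ^ 2 + 1) →
      ∀ a : ℂ, a ^ 4 + 2 * (lam : ℂ) ^ 2 * a ^ 2 + 1 = 0 →
        ∃ δ γ : ℚ, δ ≠ 0 ∧ γ ≠ 0 ∧ a = (δ : ℂ) * s + (γ : ℂ) * t) := by
  refine ⟨fun a => ⟨?_, fun h => ⟨1, 0, 2 * (lam : ℂ) * a, fun u t => by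
      linear_combination (-t ^ 4) * h⟩⟩, fun a => ⟨fun h => by linear_combination h,
      fun h => by linear_combination h⟩, fun s t hs ht a ha => ?_⟩
  · rintro ⟨p, q, r, h⟩
    have h0 := h 1 0
    have h1 := h 0 1
    have h2 := h 1 1
    have h3 := h 1 (-1)
    have h4 := h 2 1
    have h5 := h (-2) 1
    have e1 : q * (p + r) = 0 := by linear_combination (h3 - h2) / 4
    have e2 : q * (4 * p + r) = 0 := by linear_combination (h5 - h4) / 8
    have hq : q = 0 := by linear_combination (p / 3) * e2 - (p / 3) * e1 + q * h0
    subst hq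
    linear_combination ((4 * (lam : ℂ) * a + 2 * p * r) / 4) * (h2 - h0 - h1)
      - r ^ 2 * h0 - h1
  · have key : (a - (s + t) / 2) * (a + (s + t) / 2) * (a - (s - t) / 2)
        * (a + (s - t) / 2) = 0 := by
      linear_combination ha - (a ^ 2 / 2) * (hs + ht)
        + ((s ^ 2 - t ^ 2 + 4) / 16) * (hs - ht)
    have h2 : (1 / 2 : ℚ) ≠ 0 := by norm_num
    have hm : (-(1 / 2) : ℚ) ≠ 0 := by norm_num
    rcases mul_eq_zero.1 key with h | h
    · rcases mul_eq_zero.1 h with h | h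
      · rcases mul_eq_zero.1 h with h | h
        · exact ⟨1 / 2, 1 / 2, h2, h2, by push_cast; linear_combination h⟩
        · exact ⟨-(1 / 2), -(1 / 2), hm, hm, by push_cast; linear_combination h⟩
      · exact ⟨1 / 2, -(1 / 2), h2, hm, by push_cast; linear_combination h⟩
    · exact ⟨-(1 / 2), 1 / 2, hm, h2, by push_cast; linear_combination h⟩
end

section
/- Let A ≅ (Z/4Z)² be the group of projective automorphisms α(X₀:X₁:X₂:X₃) = (ξ^{r₀}X₀:ξ^{r₁}X₁:ξ^{r₂}X₂:ξ^{r₃}X₃) with r₀+r₁+r₂+r₃ ≡ 0 (mod 4), ξ a fixed primitive 4th root of unity, taken modulo global scalars ξ^k. Then A is a group of order 16 isomorphic to (Z/4Z)², each element of A maps X_λ to itself, and the quotient map φ(X₀:X₁:X₂:X₃) = (X₀⁴:X₁⁴:X₂⁴:X₃⁴) sends X_λ onto the hypersurface M_λ: (Y₀+Y₁+Y₂+Y₃)⁴ − (4λ)⁴Y₀Y₁Y₂Y₃ = 0, with φ constant on A-orbits. -/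
open scoped BigOperators

/-- The sum-zero vectors in `(ℤ/4ℤ)⁴`, i.e. the exponent vectors of the
automorphisms `(X_i) ↦ (ξ^{r_i} X_i)` with `Σ r_i ≡ 0 (mod 4)`. -/
def sumZero4 : AddSubgroup (Fin 4 → ZMod 4) where
  carrier := {r | ∑ i, r i = 0}
  add_mem' := by
    intro a b ha hb
    simp only [Set.mem_setOf_eq, Pi.add_apply, Finset.sum_add_distrib] at *
    rw [ha, hb, add_zero]
  zero_mem' := by simp
  neg_mem' := by
    intro a ha
    simp only [Set.mem_setOf_eq, Pi.neg_apply, Finset.sum_neg_distrib] at *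
    rw [ha, neg_zero]

/-- The diagonal (global-scalar) exponent vectors inside `sumZero4`. -/
def diag4 : AddSubgroup sumZero4 where
  carrier := {r | ∃ c : ZMod 4, ∀ i, (r : Fin 4 → ZMod 4) i = c}
  add_mem' := by
    rintro a b ⟨c, hc⟩ ⟨d, hd⟩
    exact ⟨c + d, fun i => by simp [hc i, hd i]⟩
  zero_mem' := ⟨0, fun i => rfl⟩
  neg_mem' := by
    rintro a ⟨c, hc⟩
    exact ⟨-c, fun i => by simp [hc i]⟩


/-- Auxiliary hom `sumZero4 → ZMod 4 × ZMod 4` with kernel `diag4`. -/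
def auxHom19 : sumZero4 →+ (ZMod 4 × ZMod 4) where
  toFun r := ((r : Fin 4 → ZMod 4) 0 - (r : Fin 4 → ZMod 4) 3,
    (r : Fin 4 → ZMod 4) 1 - (r : Fin 4 → ZMod 4) 3)
  map_zero' := by simp
  map_add' a b := by
    simp only [AddSubgroup.coe_add, Pi.add_apply, Prod.mk_add_mk, Prod.mk.injEq]
    constructor <;> ring

lemma auxHom19_surj : Function.Surjective auxHom19 := by
  rintro ⟨a, b⟩
  refine ⟨⟨![a, b, -a - b, 0], ?_⟩, ?_⟩
  · show ∑ i, _ = 0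
    simp only [Fin.sum_univ_four, Matrix.cons_val_zero, Matrix.cons_val_one, Matrix.head_cons]
    show a + b + (-a - b) + (0 : ZMod 4) = 0
    ring
  · simp [auxHom19]

lemma auxHom19_ker : auxHom19.ker = diag4 := by
  ext r
  obtain ⟨r, hr⟩ := r
  have hsum : r 0 + r 1 + r 2 + r 3 = 0 := by
    have := hr; rw [← Fin.sum_univ_four r]; exact this
  constructor
  · intro h
    simp only [AddMonoidHom.mem_ker, auxHom19, AddMonoidHom.coe_mk, ZeroHom.coe_mk,
      Prod.mk_eq_zero, sub_eq_zero] at h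
    obtain ⟨h0, h1⟩ := h
    have h2 : r 2 = r 3 := by
      have : ∀ a b c d : ZMod 4, a + b + c + d = 0 → a = d → b = d → c = d := by decide
      exact this _ _ _ _ hsum h0 h1
    refine ⟨r 3, fun i => ?_⟩
    fin_cases i <;> simp [h0, h1, h2]
  · rintro ⟨c, hc⟩
    simp only [AddMonoidHom.mem_ker, auxHom19, AddMonoidHom.coe_mk, ZeroHom.coe_mk,
      Prod.mk_eq_zero, sub_eq_zero]
    have h0 : r 0 = c := hc 0
    have h1 : r 1 = c := hc 1
    have h3 : r 3 = c := hc 3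
    exact ⟨by rw [h0, h3], by rw [h1, h3]⟩

noncomputable def auxEquiv19 : (sumZero4 ⧸ diag4) ≃+ (ZMod 4 × ZMod 4) :=
  (QuotientAddGroup.quotientAddEquivOfEq auxHom19_ker.symm).trans
    (QuotientAddGroup.quotientKerEquivOfSurjective auxHom19 auxHom19_surj)

/-- The group `A` of projective automorphisms `(X_i) ↦ (ξ^{r_i}X_i)`,
`Σ r_i ≡ 0 (mod 4)`, taken modulo global scalars, has order `16` and is
isomorphic to `(ℤ/4ℤ)²`; each of these automorphisms maps `X_λ` to itself; and
the quotient map `φ : (X_i) ↦ (X_i⁴)`, which is constant on `A`-orbits, sends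
`X_λ` onto the hypersurface `M_λ : (Y₀+Y₁+Y₂+Y₃)⁴ − (4λ)⁴Y₀Y₁Y₂Y₃ = 0`. -/
theorem stmt19 {K : Type*} [Field K] [IsAlgClosed K]
    (ξ : K) (hξ : IsPrimitiveRoot ξ 4) (lam : K) :
    Nat.card (sumZero4 ⧸ diag4) = 16 ∧
    Nonempty ((sumZero4 ⧸ diag4) ≃+ (ZMod 4 × ZMod 4)) ∧
    (∀ r : Fin 4 → ZMod 4, (∑ i, r i) = 0 → ∀ x : Fin 4 → K,
      x 0 ^ 4 + x 1 ^ 4 + x 2 ^ 4 + x 3 ^ 4 - 4 * lam * (x 0 * x 1 * x 2 * x 3) = 0 →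
      (ξ ^ (r 0).val * x 0) ^ 4 + (ξ ^ (r 1).val * x 1) ^ 4 + (ξ ^ (r 2).val * x 2) ^ 4 +
        (ξ ^ (r 3).val * x 3) ^ 4 -
        4 * lam * ((ξ ^ (r 0).val * x 0) * (ξ ^ (r 1).val * x 1) *
          (ξ ^ (r 2).val * x 2) * (ξ ^ (r 3).val * x 3)) = 0) ∧
    (∀ r : Fin 4 → ZMod 4, ∀ x : Fin 4 → K,
      (fun i => (ξ ^ (r i).val * x i) ^ 4) = fun i => x i ^ 4) ∧
    (∀ x : Fin 4 → K,
      x 0 ^ 4 + x 1 ^ 4 + x 2 ^ 4 + x 3 ^ 4 - 4 * lam * (x 0 * x 1 * x 2 * x 3) = 0 →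
      (x 0 ^ 4 + x 1 ^ 4 + x 2 ^ 4 + x 3 ^ 4) ^ 4 -
        (4 * lam) ^ 4 * (x 0 ^ 4 * x 1 ^ 4 * x 2 ^ 4 * x 3 ^ 4) = 0) ∧
    (∀ y : Fin 4 → K,
      (y 0 + y 1 + y 2 + y 3) ^ 4 - (4 * lam) ^ 4 * (y 0 * y 1 * y 2 * y 3) = 0 →
      ∃ x : Fin 4 → K,
        x 0 ^ 4 + x 1 ^ 4 + x 2 ^ 4 + x 3 ^ 4 - 4 * lam * (x 0 * x 1 * x 2 * x 3) = 0 ∧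
        ∀ i, x i ^ 4 = y i) := by
  have hξ4 : ξ ^ 4 = 1 := hξ.pow_eq_one
  have hp : ∀ (v : ℕ) (x : K), (ξ ^ v * x) ^ 4 = x ^ 4 := fun v x => by
    rw [mul_pow, ← pow_mul, mul_comm v 4, pow_mul, hξ4, one_pow, one_mul]
  refine ⟨?_, ⟨auxEquiv19⟩, ?_, ?_, ?_, ?_⟩
  · rw [Nat.card_congr auxEquiv19.toEquiv]
    simp [Nat.card_eq_fintype_card]
  · intro r hr x hx
    have hdvd : (4 : ℕ) ∣ (r 0).val + (r 1).val + (r 2).val + (r 3).val := by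
      rw [← ZMod.natCast_eq_zero_iff]
      push_cast
      simp only [ZMod.natCast_val, ZMod.cast_id]
      rw [← Fin.sum_univ_four r]; exact hr
    obtain ⟨k, hk⟩ := hdvd
    have hS : ξ ^ ((r 0).val + (r 1).val + (r 2).val + (r 3).val) = 1 := by
      rw [hk, pow_mul, hξ4, one_pow]
    have hprod : (ξ ^ (r 0).val * x 0) * (ξ ^ (r 1).val * x 1) * (ξ ^ (r 2).val * x 2) *
        (ξ ^ (r 3).val * x 3)
        = ξ ^ ((r 0).val + (r 1).val + (r 2).val + (r 3).val) * (x 0 * x 1 * x 2 * x 3) := by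
      rw [pow_add, pow_add, pow_add]; ring
    rw [hp, hp, hp, hp, hprod, hS, one_mul]
    exact hx
  · intro r x
    funext i
    exact hp _ _
  · intro x hx
    rw [sub_eq_zero] at hx ⊢
    rw [hx]; ring
  · intro y hy
    obtain ⟨x0, hx0⟩ := IsAlgClosed.exists_pow_nat_eq (y 0) (n := 4) (by norm_num)
    obtain ⟨x1, hx1⟩ := IsAlgClosed.exists_pow_nat_eq (y 1) (n := 4) (by norm_num)
    obtain ⟨x2, hx2⟩ := IsAlgClosed.exists_pow_nat_eq (y 2) (n := 4) (by norm_num)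
    obtain ⟨x3, hx3⟩ := IsAlgClosed.exists_pow_nat_eq (y 3) (n := 4) (by norm_num)
    rw [sub_eq_zero] at hy
    have hab : (y 0 + y 1 + y 2 + y 3) ^ 4 = (4 * lam * (x0 * x1 * x2 * x3)) ^ 4 := by
      rw [hy, ← hx0, ← hx1, ← hx2, ← hx3]; ring
    by_cases hb : 4 * lam * (x0 * x1 * x2 * x3) = 0
    · have ha : y 0 + y 1 + y 2 + y 3 = 0 := by
        have : (y 0 + y 1 + y 2 + y 3) ^ 4 = 0 := by rw [hab, hb]; ring
        exact pow_eq_zero_iff (by norm_num) |>.mp this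
      refine ⟨![x0, x1, x2, x3], ?_, ?_⟩
      · show x0 ^ 4 + x1 ^ 4 + x2 ^ 4 + x3 ^ 4 - 4 * lam * (x0 * x1 * x2 * x3) = 0
        rw [hx0, hx1, hx2, hx3, hb, ha, sub_zero]
      · intro i; fin_cases i <;> simpa using by assumption
    · have h1 : ((y 0 + y 1 + y 2 + y 3) / (4 * lam * (x0 * x1 * x2 * x3))) ^ 4 = 1 := by
        rw [div_pow, hab, div_self (pow_ne_zero _ hb)]
      obtain ⟨i, _, hi⟩ := hξ.eq_pow_of_pow_eq_one h1
      have hx0' : (ξ ^ i * x0) ^ 4 = y 0 := by rw [hp, hx0]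
      refine ⟨![ξ ^ i * x0, x1, x2, x3], ?_, ?_⟩
      · show (ξ ^ i * x0) ^ 4 + x1 ^ 4 + x2 ^ 4 + x3 ^ 4 -
          4 * lam * (ξ ^ i * x0 * x1 * x2 * x3) = 0
        have : 4 * lam * (ξ ^ i * x0 * x1 * x2 * x3)
            = ξ ^ i * (4 * lam * (x0 * x1 * x2 * x3)) := by ring
        rw [hx0', hx1, hx2, hx3, this, hi, div_mul_cancel₀ _ hb, sub_self]
      · intro i'; fin_cases i' <;> simpa using by assumption
end
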